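/- arXiv:1110.5390 — 5 statements merged into one kernel-verified Lean document; each statement's English description precedes it below -/
import Mathlib

section
/- Let H be a Hilbert space and let e_1,...,e_n be an orthonormal set in H. If V ⊆ H is a linear subspace such that for each j there exists v ∈ V with ‖e_j - v‖ < ε (where 0 < ε), then dim V ≥ n(1 - ε²). -/
/-!
Let `P` be the orthogonal projection onto `V` and `f₁, …, f_d` an orthonormal basis of `V`.
Each `e_j` is within `ε` of `V`, so by Pythagoras `‖P e_j‖² ≥ 1 - ε²`. On the other hand
`∑_j ‖P e_j‖² = ∑_i ∑_j |⟪f_i, e_j⟫|²`, and by Bessel's inequality for the orthonormal family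
`(e_j)` each inner sum is at most `‖f_i‖² = 1`, so the total is at most `d`.
-/

open Module

section

variable {𝕜 E : Type*} [RCLike 𝕜] [NormedAddCommGroup E] [InnerProductSpace 𝕜 E]

theorem Submodule.norm_sq_sub_norm_sub_sq_le_norm_starProjection_sq (U : Submodule 𝕜 E)
    [U.HasOrthogonalProjection] (x : E) {v : E} (hv : v ∈ U) :
    ‖x‖ ^ 2 - ‖x - v‖ ^ 2 ≤ ‖U.starProjection x‖ ^ 2 := by
  have hmin : ‖x - U.starProjection x‖ ≤ ‖x - v‖ := by
    rw [starProjection_minimal]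
    exact ciInf_le ⟨0, Set.forall_mem_range.mpr fun _ => norm_nonneg _⟩ (⟨v, hv⟩ : U)
  have hpyth := U.norm_sq_eq_add_norm_sq_starProjection x
  rw [starProjection_orthogonal_val] at hpyth
  nlinarith [norm_nonneg (x - U.starProjection x)]

theorem OrthonormalBasis.norm_starProjection_sq_eq_sum {ι : Type*} [Fintype ι]
    {U : Submodule 𝕜 E} [U.HasOrthogonalProjection] (b : OrthonormalBasis ι 𝕜 U) (x : E) :
    ‖U.starProjection x‖ ^ 2 = ∑ i, ‖inner 𝕜 (b i : E) x‖ ^ 2 := by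
  rw [Submodule.starProjection_apply, Submodule.norm_coe, ← b.sum_sq_norm_inner_right]
  simp only [Submodule.inner_orthogonalProjectionOnto_eq_of_mem_left]

theorem Orthonormal.sum_norm_starProjection_sq_le_finrank {ι : Type*} [Fintype ι]
    {e : ι → E} (he : Orthonormal 𝕜 e) (U : Submodule 𝕜 E) [FiniteDimensional 𝕜 U] :
    ∑ j, ‖U.starProjection (e j)‖ ^ 2 ≤ finrank 𝕜 U := by
  let b := stdOrthonormalBasis 𝕜 U
  have hbessel (i : Fin (finrank 𝕜 U)) : ∑ j, ‖inner 𝕜 (b i : E) (e j)‖ ^ 2 ≤ 1 := by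
    simp_rw [norm_inner_symm (b i : E)]
    have hnorm : ‖(b i : E)‖ = 1 := b.orthonormal.1 i
    simpa [hnorm] using he.sum_inner_products_le (b i : E) (s := Finset.univ)
  calc ∑ j, ‖U.starProjection (e j)‖ ^ 2
      = ∑ i, ∑ j, ‖inner 𝕜 (b i : E) (e j)‖ ^ 2 := by
        simp_rw [b.norm_starProjection_sq_eq_sum]
        exact Finset.sum_comm
    _ ≤ ∑ _i : Fin (finrank 𝕜 U), (1 : ℝ) := Finset.sum_le_sum fun i _ => hbessel i
    _ = finrank 𝕜 U := by simp

end

theorem orthonormal_eps_contained_dim_lower_bound_general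
    {H : Type*} [NormedAddCommGroup H] [InnerProductSpace ℂ H]
    {n : ℕ} {e : Fin n → H} (he : Orthonormal ℂ e)
    (V : Submodule ℂ H) [FiniteDimensional ℂ V]
    {ε : ℝ}
    (hcont : ∀ j : Fin n, ∃ v ∈ V, ‖e j - v‖ < ε) :
    (n : ℝ) * (1 - ε ^ 2) ≤ (Module.finrank ℂ V : ℝ) := by
  have hproj (j : Fin n) : 1 - ε ^ 2 ≤ ‖V.starProjection (e j)‖ ^ 2 := by
    obtain ⟨v, hv, hdist⟩ := hcont j
    have hsq : ‖e j - v‖ ^ 2 < ε ^ 2 := pow_lt_pow_left₀ hdist (norm_nonneg _) two_ne_zero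
    have := V.norm_sq_sub_norm_sub_sq_le_norm_starProjection_sq (e j) hv
    rw [he.1 j] at this
    linarith
  calc (n : ℝ) * (1 - ε ^ 2) = ∑ _j : Fin n, (1 - ε ^ 2) := by
        rw [Finset.sum_const, Finset.card_fin, nsmul_eq_mul]
    _ ≤ ∑ j, ‖V.starProjection (e j)‖ ^ 2 := Finset.sum_le_sum fun j _ => hproj j
    _ ≤ finrank ℂ V := he.sum_norm_starProjection_sq_le_finrank V

/-- Let `H` be a Hilbert space and `e₁, …, eₙ` an orthonormal set in `H`.
If `V ⊆ H` is a (finite-dimensional) linear subspace such that for each `j` there is `v ∈ V`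
with `‖e j - v‖ < ε` (where `0 < ε`), then `dim V ≥ n (1 - ε²)`. -/
theorem orthonormal_eps_contained_dim_lower_bound
    {H : Type*} [NormedAddCommGroup H] [InnerProductSpace ℂ H] [CompleteSpace H]
    {n : ℕ} {e : Fin n → H} (he : Orthonormal ℂ e)
    (V : Submodule ℂ H) [FiniteDimensional ℂ V]
    {ε : ℝ} (hε : 0 < ε)
    (hcont : ∀ j : Fin n, ∃ v ∈ V, ‖e j - v‖ < ε) :
    (n : ℝ) * (1 - ε ^ 2) ≤ (Module.finrank ℂ V : ℝ) :=
  orthonormal_eps_contained_dim_lower_bound_general he V hcont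
end

section
/- Let H be a Hilbert space, η_1,...,η_k an orthonormal system in H, and V the span of the η_j. Let P be an orthogonal projection on H and P_V the orthogonal projection onto V. If W is a finite-dimensional subspace of H such that for each j there is w ∈ W with ‖P(η_j) - w‖ ≤ ε, then dim W ≥ Tr(P_V P) - kε. -/
/-!
Since `P` is an orthogonal projection, `Re ⟪η_j, P η_j⟫ = ‖P η_j‖²`, and `‖P η_j‖ ≤ 1`. The part
of `P η_j` orthogonal to `W` has norm at most `min ε 1`, so Pythagoras gives
`‖P η_j‖² ≤ ‖Q P η_j‖² + ε` with `Q` the projection onto `W`. Finally, expanding `‖Q P η_j‖²` in an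
orthonormal basis `b` of `W` and applying Bessel's inequality to the `η_j` gives
`∑_j ‖Q P η_j‖² = ∑_i ∑_j |⟪η_j, P b_i⟫|² ≤ ∑_i ‖P b_i‖² ≤ dim W`.
-/

open scoped InnerProductSpace InnerProduct

section

variable {𝕜 E : Type*} [RCLike 𝕜] [NormedAddCommGroup E] [InnerProductSpace 𝕜 E]

namespace Submodule

theorem norm_sq_le_norm_starProjection_sq_add (K : Submodule 𝕜 E) [K.HasOrthogonalProjection]
    {x w : E} {ε : ℝ} (hx : ‖x‖ ≤ 1) (hw : w ∈ K) (hxw : ‖x - w‖ ≤ ε) :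
    ‖x‖ ^ 2 ≤ ‖K.starProjection x‖ ^ 2 + ε := by
  have hdist : ‖Kᗮ.starProjection x‖ ≤ ε := by
    rw [starProjection_orthogonal_val, starProjection_minimal]
    exact (ciInf_le ⟨0, Set.forall_mem_range.2 fun _ => norm_nonneg _⟩ (⟨w, hw⟩ : K)).trans hxw
  have hcontr : ‖Kᗮ.starProjection x‖ ≤ 1 := (Kᗮ.norm_starProjection_apply_le x).trans hx
  rw [K.norm_sq_eq_add_norm_sq_starProjection x]
  gcongr
  calc ‖Kᗮ.starProjection x‖ ^ 2 ≤ ε * 1 := by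
        rw [sq]; exact mul_le_mul hdist hcontr (norm_nonneg _) ((norm_nonneg _).trans hdist)
    _ = ε := mul_one ε

theorem norm_starProjection_apply_sq_eq_sum {ι : Type*} [Fintype ι] (K : Submodule 𝕜 E)
    [K.HasOrthogonalProjection] (b : OrthonormalBasis ι 𝕜 K) (x : E) :
    ‖K.starProjection x‖ ^ 2 = ∑ i, ‖⟪(b i : E), x⟫_𝕜‖ ^ 2 := by
  simp_rw [← K.inner_orthogonalProjectionOnto_eq_of_mem_left]
  exact (b.sum_sq_norm_inner_right _).symm

theorem sum_norm_starProjection_apply_sq_le_finrank [CompleteSpace E] (K : Submodule 𝕜 E)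
    [FiniteDimensional 𝕜 K] {ι : Type*} [Fintype ι] {η : ι → E} (hη : Orthonormal 𝕜 η)
    {T : E →L[𝕜] E} (hT : ‖T‖ ≤ 1) :
    ∑ j, ‖K.starProjection (T (η j))‖ ^ 2 ≤ Module.finrank 𝕜 K := by
  let b := stdOrthonormalBasis 𝕜 K
  have hTb (i) : ‖(T†) (b i)‖ ≤ 1 := by
    have hb : ‖(b i : E)‖ = 1 := b.orthonormal.1 i
    simpa [hb] using
      (T†).le_of_opNorm_le ((LinearIsometryEquiv.norm_map _ T).trans_le hT) (b i : E)
  calc ∑ j, ‖K.starProjection (T (η j))‖ ^ 2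
      = ∑ i, ∑ j, ‖⟪η j, (T†) (b i)⟫_𝕜‖ ^ 2 := by
        simp_rw [K.norm_starProjection_apply_sq_eq_sum b, ContinuousLinearMap.adjoint_inner_right,
          norm_inner_symm (T (η _))]
        exact Finset.sum_comm
    _ ≤ ∑ i, ‖(T†) (b i)‖ ^ 2 := by gcongr with i; exact hη.sum_inner_products_le _
    _ ≤ ∑ _i, 1 := by gcongr with i; exact pow_le_one₀ (norm_nonneg _) (hTb i)
    _ = Module.finrank 𝕜 K := by simp

end Submodule

theorem IsStarProjection.re_inner_self_apply_eq_norm_sq [CompleteSpace E] {P : E →L[𝕜] E}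
    (hP : IsStarProjection P) (x : E) : RCLike.re ⟪x, P x⟫_𝕜 = ‖P x‖ ^ 2 := by
  have hPP : P (P x) = P x := congr($(hP.isIdempotentElem.eq) x)
  calc RCLike.re ⟪x, P x⟫_𝕜 = RCLike.re ⟪P x, P x⟫_𝕜 := by
        rw [← P.adjoint_inner_right, hP.isSelfAdjoint.adjoint_eq, hPP]
    _ = ‖P x‖ ^ 2 := inner_self_eq_norm_sq _

end

theorem projection_trace_dim_lower_bound_general
    {H : Type*} [NormedAddCommGroup H] [InnerProductSpace ℂ H] [CompleteSpace H]
    {k : ℕ} {η : Fin k → H} (hη : Orthonormal ℂ η)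
    (P : H →L[ℂ] H) (hP_idem : IsIdempotentElem P) (hP_sa : IsSelfAdjoint P)
    (W : Submodule ℂ H) [FiniteDimensional ℂ W]
    {ε : ℝ}
    (hcont : ∀ j : Fin k, ∃ w ∈ W, ‖P (η j) - w‖ ≤ ε) :
    (∑ j : Fin k, ((inner ℂ (η j) (P (η j)) : ℂ)).re) - (k : ℝ) * ε
      ≤ (Module.finrank ℂ W : ℝ) := by
  have hP : IsStarProjection P := ⟨hP_idem, hP_sa⟩
  have hPη (j : Fin k) : ‖P (η j)‖ ≤ 1 := by
    simpa [hη.1 j] using P.le_of_opNorm_le (hP.norm_le P) (η j)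
  have hclose (j : Fin k) : ‖P (η j)‖ ^ 2 ≤ ‖W.starProjection (P (η j))‖ ^ 2 + ε := by
    obtain ⟨w, hw, hdist⟩ := hcont j
    exact W.norm_sq_le_norm_starProjection_sq_add (hPη j) hw hdist
  calc (∑ j, ((inner ℂ (η j) (P (η j)) : ℂ)).re) - k * ε
      = ∑ j, (‖P (η j)‖ ^ 2 - ε) := by
        simp [Finset.sum_sub_distrib, ← RCLike.re_to_complex, hP.re_inner_self_apply_eq_norm_sq]
    _ ≤ ∑ j, ‖W.starProjection (P (η j))‖ ^ 2 := by
        gcongr with j; linarith [hclose j]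
    _ ≤ Module.finrank ℂ W := W.sum_norm_starProjection_apply_sq_le_finrank hη (hP.norm_le P)

/-- Let `H` be a Hilbert space, `η₁, …, η_k` an orthonormal system in `H`,
and `V` the span of the `η_j`. Let `P` be an orthogonal projection on `H` (a self-adjoint
idempotent bounded operator) and `P_V` the orthogonal projection onto `V`. If `W` is a
finite-dimensional subspace of `H` such that each `P (η j)` is within distance `ε` of `W`,
then `dim W ≥ Tr(P_V P) - k ε`.  Here `Tr(P_V P)` is the trace of the finite-rank operator
`P_V P`, which equals `∑ j ⟪P η_j, η_j⟫` (a real number). -/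
theorem projection_trace_dim_lower_bound
    {H : Type*} [NormedAddCommGroup H] [InnerProductSpace ℂ H] [CompleteSpace H]
    {k : ℕ} {η : Fin k → H} (hη : Orthonormal ℂ η)
    (P : H →L[ℂ] H) (hP_idem : IsIdempotentElem P) (hP_sa : IsSelfAdjoint P)
    (W : Submodule ℂ H) [FiniteDimensional ℂ W]
    {ε : ℝ} (hε : 0 < ε)
    (hcont : ∀ j : Fin k, ∃ w ∈ W, ‖P (η j) - w‖ ≤ ε) :
    (∑ j : Fin k, ((inner ℂ (η j) (P (η j)) : ℂ)).re) - (k : ℝ) * ε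
      ≤ (Module.finrank ℂ W : ℝ) :=
  projection_trace_dim_lower_bound_general hη P hP_idem hP_sa W hcont
end

section
/- Let X, Y be Banach spaces with X finite-dimensional, and q : Y → X a bounded surjective linear map. Let C > 0 be such that every x ∈ X lifts to y ∈ Y with ‖y‖ ≤ C‖x‖, and fix A > C. Let (Y_α)_{α∈I} be an increasing net of subspaces of Y with q(Y_α) = X for all α and with ∪_α (Y_α ∩ ker q) dense in ker q. Fix a finite set F ⊆ ∪_α Y_α. Then for every ε > 0 there exist δ > 0 and α₀ ∈ I such that: whenever α ≥ α₀, W is a Banach space, and T : Y_α → W is a linear contraction with ‖T restricted to ker(q) ∩ Y_α‖ ≤ δ, there exists S : X → W with ‖S‖ ≤ A and ‖T(x) - S(q(x))‖ ≤ ε for all x ∈ F. -/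
/-!
Lift `q` by a bounded linear map `L : X → Y_{α₁}` (possible as `X` is finite-dimensional, but with
no control on `‖L‖`) and take `S = T ∘ L`. For `x ∈ F ∩ Y_α` the vector `x - L (q x)` lies in
`ker q`, so `‖T x - S (q x)‖ ≤ δ ‖x - L (q x)‖`, which is small once `δ` is. The norm of `S` is
controlled on a finite `θ`-net `t` of the unit sphere of `X`: for `z ∈ t` and all large `α`,
density gives `k ∈ Y_α ∩ ker q` with `‖L z - k‖ ≤ C + η`, whence
`‖S z‖ ≤ ‖L z - k‖ + δ ‖k‖ ≤ C + η + δ (‖L‖ + C + η)`. A bound `c` on a `θ`-net of the sphere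
bounds the operator norm by `c / (1 - θ)`, and small `θ`, `η`, `δ` bring this below `A`.
-/

open Filter Metric Topology

theorem ContinuousLinearMap.opNorm_le_of_sphere_net {𝕜 E F : Type*} [RCLike 𝕜]
    [NormedAddCommGroup E] [NormedSpace 𝕜 E] [NormedAddCommGroup F] [NormedSpace 𝕜 F]
    (f : E →L[𝕜] F) {t : Set E} {θ c : ℝ} (hθ₀ : 0 ≤ θ) (hθ₁ : θ < 1) (hc : 0 ≤ c)
    (hnet : sphere (0 : E) 1 ⊆ ⋃ z ∈ t, ball z θ) (hf : ∀ z ∈ t, ‖f z‖ ≤ c) :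
    ‖f‖ ≤ c / (1 - θ) := by
  have hle : ‖f‖ ≤ c + θ * ‖f‖ := by
    refine f.opNorm_le_of_unit_norm (by positivity) fun u hu => ?_
    obtain ⟨z, hz, huz⟩ := Set.mem_iUnion₂.1 (hnet (mem_sphere_zero_iff_norm.2 hu))
    calc ‖f u‖ = ‖f z + f (u - z)‖ := by rw [map_sub, add_sub_cancel]
      _ ≤ c + ‖f‖ * θ := norm_add_le_of_le (hf z hz)
          (f.le_of_opNorm_le_of_le le_rfl (mem_ball_iff_norm.1 huz).le)
      _ = c + θ * ‖f‖ := by ring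
  rw [le_div_iff₀ (by linarith)]
  linarith

theorem Submodule.exists_rightInverse_mem_of_map_eq_top {𝕜 X Y : Type*}
    [NontriviallyNormedField 𝕜] [CompleteSpace 𝕜]
    [NormedAddCommGroup X] [NormedSpace 𝕜 X] [FiniteDimensional 𝕜 X]
    [NormedAddCommGroup Y] [NormedSpace 𝕜 Y] {q : Y →ₗ[𝕜] X} {V : Submodule 𝕜 Y}
    (hV : V.map q = ⊤) : ∃ L : X →L[𝕜] Y, (∀ x, q (L x) = x) ∧ ∀ x, L x ∈ V := by
  obtain ⟨g, hg⟩ := (q ∘ₗ V.subtype).exists_rightInverse_of_surjective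
    (by rwa [LinearMap.range_comp, Submodule.range_subtype])
  exact ⟨(V.subtype ∘ₗ g).toContinuousLinearMap, fun x => LinearMap.congr_fun hg x,
    fun x => (g x).2⟩

theorem Monotone.eventually_exists_dist_lt_of_mem_closure_iUnion {I Y : Type*} [Preorder I]
    [PseudoMetricSpace Y] {Z : I → Set Y} (hZ : Monotone Z) {y : Y}
    (hy : y ∈ closure (⋃ α, Z α)) {η : ℝ} (hη : 0 < η) :
    ∀ᶠ α in atTop, ∃ k ∈ Z α, dist y k < η := by
  obtain ⟨k, hk, hyk⟩ := Metric.mem_closure_iff.1 hy η hη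
  obtain ⟨β, hkβ⟩ := Set.mem_iUnion.1 hk
  filter_upwards [eventually_ge_atTop β] with α hα using ⟨k, hZ hα hkβ, hyk⟩

theorem eventually_nhdsGT_mul_le (c : ℝ) {b : ℝ} (hb : 0 < b) :
    ∀ᶠ δ in 𝓝[>] (0 : ℝ), δ * c ≤ b :=
  nhdsWithin_le_nhds <|
    (continuous_mul_const c).tendsto' 0 0 (zero_mul c) |>.eventually (ge_mem_nhds hb)

section Factorization

variable {𝕜 X Y W : Type*} [RCLike 𝕜]
  [NormedAddCommGroup X] [NormedSpace 𝕜 X] [NormedAddCommGroup Y] [NormedSpace 𝕜 Y]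
  [NormedAddCommGroup W] [NormedSpace 𝕜 W]
  {q : Y →L[𝕜] X} {V : Submodule 𝕜 Y} {L : X →L[𝕜] Y} (hLV : ∀ x, L x ∈ V)
  {T : V →L[𝕜] W} {δ : ℝ}

theorem eventually_exists_mem_ker_norm_sub_le {I : Type*} [Preorder I] {Yα : I → Submodule 𝕜 Y}
    (hmono : Monotone Yα)
    (hker : (LinearMap.ker (q : Y →ₗ[𝕜] X) : Set Y) ⊆
      closure (⋃ α, (Yα α : Set Y) ∩ LinearMap.ker (q : Y →ₗ[𝕜] X)))
    {C : ℝ} (hlift : ∀ x : X, ∃ y : Y, q y = x ∧ ‖y‖ ≤ C * ‖x‖) (y : Y) {η : ℝ} (hη : 0 < η) :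
    ∀ᶠ α in atTop, ∃ k ∈ Yα α, q k = 0 ∧ ‖y - k‖ ≤ C * ‖q y‖ + η := by
  obtain ⟨y', hqy', hy'⟩ := hlift (q y)
  have hZ : Monotone fun α => (Yα α : Set Y) ∩ LinearMap.ker (q : Y →ₗ[𝕜] X) :=
    fun _ _ h => Set.inter_subset_inter_left _ (hmono h)
  filter_upwards [hZ.eventually_exists_dist_lt_of_mem_closure_iUnion
    (hker (by simp [hqy'] : y - y' ∈ _)) hη] with α ⟨k, ⟨hkα, hqk⟩, hyk⟩
  refine ⟨k, hkα, hqk, ?_⟩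
  calc ‖y - k‖ = ‖(y - y' - k) + y'‖ := by abel_nf
    _ ≤ ‖y - y' - k‖ + ‖y'‖ := norm_add_le _ _
    _ ≤ C * ‖q y‖ + η := by rw [dist_eq_norm] at hyk; linarith

theorem norm_sub_comp_codRestrict_le (hqL : ∀ x, q (L x) = x)
    (hT : ∀ y : V, q y = 0 → ‖T y‖ ≤ δ * ‖(y : Y)‖) (y : V) :
    ‖T y - T.comp (L.codRestrict V hLV) (q y)‖ ≤ δ * ‖(y : Y) - L (q y)‖ := by
  rw [ContinuousLinearMap.comp_apply, ← map_sub]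
  exact hT _ (by simp [hqL])

theorem norm_comp_codRestrict_le (hT₁ : ‖T‖ ≤ 1)
    (hT : ∀ y : V, q y = 0 → ‖T y‖ ≤ δ * ‖(y : Y)‖) (hδ : 0 ≤ δ) {t : Set X} {θ c : ℝ}
    (hθ₀ : 0 ≤ θ) (hθ₁ : θ < 1) (hc : 0 ≤ c) (ht : t ⊆ sphere 0 1)
    (hnet : sphere (0 : X) 1 ⊆ ⋃ z ∈ t, ball z θ)
    (happrox : ∀ z ∈ t, ∃ k ∈ V, q k = 0 ∧ ‖L z - k‖ ≤ c) :
    ‖T.comp (L.codRestrict V hLV)‖ ≤ (c + δ * (‖L‖ + c)) / (1 - θ) := by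
  refine ContinuousLinearMap.opNorm_le_of_sphere_net _ hθ₀ hθ₁ (by positivity) hnet
    fun z hz => ?_
  obtain ⟨k, hkV, hqk, hLk⟩ := happrox z hz
  have hz1 : ‖z‖ = 1 := mem_sphere_zero_iff_norm.1 (ht hz)
  have hk : ‖k‖ ≤ ‖L‖ + c := calc
    ‖k‖ ≤ ‖L z‖ + ‖L z - k‖ := norm_le_norm_add_norm_sub _ _
    _ ≤ ‖L‖ + c := add_le_add (by simpa [hz1] using L.le_opNorm z) hLk
  set k' : V := ⟨k, hkV⟩
  have hsub : ‖L.codRestrict V hLV z - k'‖ = ‖L z - k‖ := rfl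
  calc ‖T (L.codRestrict V hLV z)‖ = ‖T (L.codRestrict V hLV z - k') + T k'‖ := by
        rw [map_sub, sub_add_cancel]
    _ ≤ ‖L z - k‖ + δ * ‖k‖ :=
        norm_add_le_of_le ((T.le_of_opNorm_le_of_le hT₁ hsub.le).trans_eq (one_mul _)) (hT k' hqk)
    _ ≤ c + δ * (‖L‖ + c) := by gcongr

end Factorization

theorem approximate_factorization_through_quotient_general
    {X Y : Type*} [NormedAddCommGroup X] [NormedSpace ℂ X] [FiniteDimensional ℂ X]
    [NormedAddCommGroup Y] [NormedSpace ℂ Y]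
    (q : Y →L[ℂ] X)
    {C : ℝ} (hC : 0 < C) (hlift : ∀ x : X, ∃ y : Y, q y = x ∧ ‖y‖ ≤ C * ‖x‖)
    {A : ℝ} (hA : C < A)
    {I : Type*} [Preorder I] [Nonempty I] [IsDirected I (· ≤ ·)]
    (Yα : I → Submodule ℂ Y) (hmono : Monotone Yα)
    (honto : ∀ α, Submodule.map (q : Y →ₗ[ℂ] X) (Yα α) = ⊤)
    (hker : (LinearMap.ker (q : Y →ₗ[ℂ] X) : Set Y) ⊆
      closure (⋃ α : I, ((Yα α : Set Y) ∩ (LinearMap.ker (q : Y →ₗ[ℂ] X) : Set Y))))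
    (F : Finset Y) :
    ∀ ε > (0 : ℝ), ∃ δ > (0 : ℝ), ∃ α₀ : I, ∀ α ≥ α₀,
      ∀ (W : Type) [NormedAddCommGroup W] [NormedSpace ℂ W] [CompleteSpace W],
      ∀ T : (Yα α) →L[ℂ] W, ‖T‖ ≤ 1 →
      (∀ y : Yα α, (y : Y) ∈ LinearMap.ker (q : Y →ₗ[ℂ] X) → ‖T y‖ ≤ δ * ‖(y : Y)‖) →
      ∃ S : X →L[ℂ] W, ‖S‖ ≤ A ∧
        ∀ x ∈ F, ∀ hx : x ∈ Yα α, ‖T ⟨x, hx⟩ - S (q x)‖ ≤ ε := by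
  intro ε hε
  obtain ⟨α₁⟩ := ‹Nonempty I›
  obtain ⟨L, hqL, hLα₁⟩ : ∃ L : X →L[ℂ] Y, (∀ x, q (L x) = x) ∧ ∀ x, L x ∈ Yα α₁ :=
    Submodule.exists_rightInverse_mem_of_map_eq_top (honto α₁)
  have hA₀ : 0 < A := hC.trans hA
  set η := (A - C) / 4 with hη
  set θ := (A - C) / (2 * A) with hθ
  have hθ₀ : 0 < θ := by positivity
  have hθ₁ : θ < 1 := by rw [hθ, div_lt_one (by positivity)]; linarith
  obtain ⟨t, ht, ht_fin, hnet⟩ :=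
    finite_cover_balls_of_compact (isCompact_sphere (0 : X) 1) hθ₀
  obtain ⟨δ, hδ, hδL, hδF⟩ :
      ∃ δ > 0, δ * (‖L‖ + (C + η)) ≤ η ∧ ∀ x ∈ F, δ * ‖x - L (q x)‖ ≤ ε :=
    (eventually_mem_nhdsWithin.and <| (eventually_nhdsGT_mul_le _ (by positivity)).and <|
      (eventually_all_finset F).2 fun x _ => eventually_nhdsGT_mul_le _ hε).exists
  have happrox : ∀ᶠ α in atTop, α₁ ≤ α ∧ ∀ z ∈ t, ∃ k ∈ Yα α, q k = 0 ∧ ‖L z - k‖ ≤ C + η := by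
    refine (eventually_ge_atTop α₁).and <| (eventually_all_finite ht_fin).2 fun z hz => ?_
    simpa [hqL, mem_sphere_zero_iff_norm.1 (ht hz)] using
      eventually_exists_mem_ker_norm_sub_le hmono hker hlift (L z) (by positivity : 0 < η)
  obtain ⟨α₀, hα₀⟩ := eventually_atTop.1 happrox
  refine ⟨δ, hδ, α₀, fun α hα W _ _ _ T hT₁ hT => ?_⟩
  obtain ⟨hα₁, hk⟩ := hα₀ α hα
  have hLα : ∀ x, L x ∈ Yα α := fun x => hmono hα₁ (hLα₁ x)
  refine ⟨T.comp (L.codRestrict _ hLα), ?_, fun x hxF hx => ?_⟩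
  · refine (norm_comp_codRestrict_le hLα hT₁ hT hδ.le hθ₀.le hθ₁ (by positivity) ht hnet
      hk).trans ?_
    have hAθ : A * (1 - θ) = (A + C) / 2 := by rw [hθ]; field_simp; ring
    rw [div_le_iff₀ (by linarith), hAθ]
    linarith
  · exact (norm_sub_comp_codRestrict_le hLα hqL hT ⟨x, hx⟩).trans (hδF x hxF)

/-- Let `X, Y` be Banach spaces with `X` finite-dimensional, and
`q : Y → X` a bounded surjective linear map. Let `C > 0` be such that every `x ∈ X` lifts
to `y ∈ Y` with `‖y‖ ≤ C ‖x‖`, and fix `A > C`. Let `(Y_α)_{α ∈ I}` be an increasing net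
of subspaces of `Y` with `q(Y_α) = X` for all `α` and with `⋃_α (Y_α ∩ ker q)` dense in
`ker q`. Fix a finite set `F ⊆ ⋃_α Y_α`. Then for every `ε > 0` there exist `δ > 0` and
`α₀ ∈ I` such that: whenever `α ≥ α₀`, `W` is a Banach space, and `T : Y_α → W` is a linear
contraction whose restriction to `ker q ∩ Y_α` has norm at most `δ`, there exists
`S : X → W` with `‖S‖ ≤ A` and `‖T x - S (q x)‖ ≤ ε` for all `x ∈ F`. -/
theorem approximate_factorization_through_quotient
    {X Y : Type*} [NormedAddCommGroup X] [NormedSpace ℂ X] [FiniteDimensional ℂ X]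
    [NormedAddCommGroup Y] [NormedSpace ℂ Y] [CompleteSpace Y]
    (q : Y →L[ℂ] X) (hq : Function.Surjective q)
    {C : ℝ} (hC : 0 < C) (hlift : ∀ x : X, ∃ y : Y, q y = x ∧ ‖y‖ ≤ C * ‖x‖)
    {A : ℝ} (hA : C < A)
    {I : Type*} [Preorder I] [Countable I] [Nonempty I] [IsDirected I (· ≤ ·)]
    (Yα : I → Submodule ℂ Y) (hmono : Monotone Yα)
    (honto : ∀ α, Submodule.map (q : Y →ₗ[ℂ] X) (Yα α) = ⊤)
    (hker : (LinearMap.ker (q : Y →ₗ[ℂ] X) : Set Y) ⊆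
      closure (⋃ α : I, ((Yα α : Set Y) ∩ (LinearMap.ker (q : Y →ₗ[ℂ] X) : Set Y))))
    (F : Finset Y) (hF : (F : Set Y) ⊆ ⋃ α : I, (Yα α : Set Y)) :
    ∀ ε > (0 : ℝ), ∃ δ > (0 : ℝ), ∃ α₀ : I, ∀ α ≥ α₀,
      ∀ (W : Type) [NormedAddCommGroup W] [NormedSpace ℂ W] [CompleteSpace W],
      ∀ T : (Yα α) →L[ℂ] W, ‖T‖ ≤ 1 →
      (∀ y : Yα α, (y : Y) ∈ LinearMap.ker (q : Y →ₗ[ℂ] X) → ‖T y‖ ≤ δ * ‖(y : Y)‖) →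
      ∃ S : X →L[ℂ] W, ‖S‖ ≤ A ∧
        ∀ x ∈ F, ∀ hx : x ∈ Yα α, ‖T ⟨x, hx⟩ - S (q x)‖ ≤ ε :=
  approximate_factorization_through_quotient_general q hC hlift hA Yα hmono honto hker F
end

section
/- Let F_n be the free group on generators a_1,...,a_n with its Cayley graph (a tree), and for x ∈ F_n let γ_x be the unique geodesic from e to x. Define A : ℂ^{E(F_n)} → ℂ^{F_n} by (Af)(x) = Σ_{j=1}^{|x|} f(γ_x(j-1), γ_x(j)). Then δ(Af) = f for all f, A maps each basis edge function E_{(x,xa_j)} into ℓ^∞(F_n), and consequently ker(∂) ∩ ℓ¹(E(F_n)) = {0}. -/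
open scoped Classical

noncomputable section

/-- The `j`-th vertex of the unique geodesic in the Cayley tree of the free group from the
identity to `x` (the prefix of length `j` of the reduced word of `x`). -/
def geodesicAt {n : ℕ} (x : FreeGroup (Fin n)) (j : ℕ) : FreeGroup (Fin n) :=
  FreeGroup.mk (x.toWord.take j)

/-- The "antiderivative" operator: `(A f)(x) = ∑_{j=1}^{|x|} f(γ_x(j-1), γ_x(j))`, summing
an edge function along the geodesic from `e` to `x`. -/
def geodesicSum {n : ℕ} (f : FreeGroup (Fin n) × FreeGroup (Fin n) → ℂ)
    (x : FreeGroup (Fin n)) : ℂ :=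
  ∑ j ∈ Finset.range x.toWord.length, f (geodesicAt x j, geodesicAt x (j + 1))

/-- The antisymmetric indicator `E_{(x,s)}` of the oriented edge from `x` to `s`. -/
def edgeIndicator {n : ℕ} (x s : FreeGroup (Fin n)) :
    FreeGroup (Fin n) × FreeGroup (Fin n) → ℂ :=
  fun yt => if yt = (x, s) then 1 else if yt = (s, x) then -1 else 0


/-! Summing an antisymmetric edge function `f` along geodesics of the Cayley tree inverts the
coboundary: a neighbour `y` of `x` has as geodesic either that of `x` extended by the edge
`(x, y)`, or that of `x` with the edge `(y, x)` removed. For an edge `e = (x, x aᵢ)` the function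
`A E_e` is bounded, since a geodesic passes through each vertex at most once. Hence for
`f ∈ ℓ¹` with `∂ f = 0`, summation by parts gives
`2 f(e) = ⟨f, E_e⟩ = ⟨f, δ (A E_e)⟩ = ⟨∂ f, A E_e⟩ = 0`. -/

theorem Summable.mul_of_norm_le {ι : Type*} {f h : ι → ℂ} (hf : Summable f) {C : ℝ}
    (hh : ∀ i, ‖h i‖ ≤ C) : Summable fun i => f i * h i :=
  .of_norm_bounded (hf.norm.mul_right C) fun i => by
    rw [norm_mul]; exact mul_le_mul_of_nonneg_left (hh i) (norm_nonneg _)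

section Pairing

variable {V : Type*} {f : V × V → ℂ} {g : V → ℂ} {C : ℝ}

theorem tsum_mul_comp_fst_eq_zero (hf : Summable f) (hrow : ∀ a, ∑' b, f (a, b) = 0)
    (hg : ∀ v, ‖g v‖ ≤ C) : ∑' p, f p * g p.1 = 0 := by
  rw [(hf.mul_of_norm_le fun p => hg p.1).tsum_prod' fun a =>
    (hf.prod_factor a).mul_right (g a)]
  simp [tsum_mul_right, hrow]

theorem tsum_mul_sub_eq_zero (hf : Summable f) (hanti : ∀ a b, f (a, b) = -f (b, a))
    (hrow : ∀ a, ∑' b, f (a, b) = 0) (hg : ∀ v, ‖g v‖ ≤ C) :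
    ∑' p, f p * (g p.2 - g p.1) = 0 := by
  have hswap : ∑' p, f p * g p.2 = -∑' p, f p * g p.1 := by
    rw [← (Equiv.prodComm V V).tsum_eq, ← tsum_neg]
    refine tsum_congr fun ⟨a, b⟩ => ?_
    rw [Equiv.prodComm_apply, Prod.swap_prod_mk, hanti]
    ring
  simp_rw [mul_sub]
  rw [(hf.mul_of_norm_le fun p => hg p.2).tsum_sub (hf.mul_of_norm_le fun p => hg p.1), hswap,
    tsum_mul_comp_fst_eq_zero hf hrow hg, neg_zero, sub_zero]

end Pairing

namespace FreeGroup

variable {α : Type*}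

theorem inv_of_eq_mk (a : α) : (of a)⁻¹ = mk [(a, false)] := by
  rw [of, inv_mk]; rfl

variable [DecidableEq α]

theorem toWord_mk_of_isReduced {L : List (α × Bool)} (h : IsReduced L) : (mk L).toWord = L := by
  rw [toWord_mk, h.reduce_eq]

theorem mk_singleton_injective : Function.Injective fun l : α × Bool => mk [l] := by
  intro l l' h
  simpa [toWord_mk_of_isReduced IsReduced.singleton] using congrArg toWord h

theorem toWord_mul_mk_singleton (x : FreeGroup α) (l : α × Bool) :
    (x * mk [l]).toWord = x.toWord ++ [l] ∨
      x.toWord = (x * mk [l]).toWord ++ [(l.1, !l.2)] := by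
  rw [toWord_mul, toWord_mk_of_isReduced IsReduced.singleton]
  by_cases h : IsReduced (x.toWord ++ [l])
  · exact .inl h.reduce_eq
  · right
    have hlast : x.toWord.getLast? = some (l.1, !l.2) := by
      contrapose! h
      refine List.isChain_append.2 ⟨isReduced_toWord, IsReduced.singleton, ?_⟩
      intro a ha b hb hab
      simp only [Option.mem_def, List.head?_cons, Option.some.injEq] at ha hb
      subst hb
      by_contra hne
      exact h (ha.trans (congrArg some (Prod.ext hab (Bool.eq_not_iff.2 hne))))
    have hx : x.toWord.dropLast ++ [(l.1, !l.2)] = x.toWord :=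
      List.dropLast_append_getLast? _ hlast
    have hstep : Red.Step (x.toWord ++ [l]) (x.toWord.dropLast ++ []) := by
      conv_lhs => rw [← hx, List.append_assoc]
      exact Red.Step.not_rev (x := l.1) (b := l.2)
    rw [reduce.Step.eq hstep, List.append_nil,
      (isReduced_toWord.infix x.toWord.dropLast_prefix.isInfix).reduce_eq, hx]

end FreeGroup

section Geodesic

variable {n : ℕ}

theorem toWord_geodesicAt (x : FreeGroup (Fin n)) (j : ℕ) :
    (geodesicAt x j).toWord = x.toWord.take j :=
  FreeGroup.toWord_mk_of_isReduced
    (FreeGroup.isReduced_toWord.infix (x.toWord.take_prefix j).isInfix)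

theorem length_toWord_geodesicAt {x : FreeGroup (Fin n)} {j : ℕ} (hj : j ≤ x.toWord.length) :
    (geodesicAt x j).toWord.length = j := by
  rw [toWord_geodesicAt, List.length_take, min_eq_left hj]

theorem geodesicAt_of_length_le {x : FreeGroup (Fin n)} {j : ℕ} (hj : x.toWord.length ≤ j) :
    geodesicAt x j = x := by
  rw [geodesicAt, List.take_of_length_le hj, FreeGroup.mk_toWord]

theorem geodesicAt_of_toWord_eq_append {x y : FreeGroup (Fin n)} {l : Fin n × Bool}
    (h : y.toWord = x.toWord ++ [l]) {j : ℕ} (hj : j ≤ x.toWord.length) :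
    geodesicAt y j = geodesicAt x j := by
  rw [geodesicAt, geodesicAt, h, List.take_append_of_le_length hj]

theorem geodesicSum_of_toWord_eq_append (f : FreeGroup (Fin n) × FreeGroup (Fin n) → ℂ)
    {x y : FreeGroup (Fin n)} {l : Fin n × Bool} (h : y.toWord = x.toWord ++ [l]) :
    geodesicSum f y = geodesicSum f x + f (x, y) := by
  have hlen : y.toWord.length = x.toWord.length + 1 := by simp [h]
  rw [geodesicSum, hlen, Finset.sum_range_succ, geodesicAt_of_toWord_eq_append h le_rfl,
    geodesicAt_of_length_le le_rfl, geodesicAt_of_length_le hlen.le, geodesicSum]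
  congr 1
  refine Finset.sum_congr rfl fun j hj => ?_
  rw [Finset.mem_range] at hj
  rw [geodesicAt_of_toWord_eq_append h hj.le, geodesicAt_of_toWord_eq_append h hj]

variable {f : FreeGroup (Fin n) × FreeGroup (Fin n) → ℂ}

theorem geodesicSum_mul_mk_singleton_sub (hf : ∀ a b, f (a, b) = -f (b, a))
    (x : FreeGroup (Fin n)) (l : Fin n × Bool) :
    geodesicSum f (x * FreeGroup.mk [l]) - geodesicSum f x = f (x, x * FreeGroup.mk [l]) := by
  rcases FreeGroup.toWord_mul_mk_singleton x l with h | h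
  · rw [geodesicSum_of_toWord_eq_append f h]; ring
  · rw [geodesicSum_of_toWord_eq_append f h, hf]; ring

theorem geodesicSum_mul_of_sub (hf : ∀ a b, f (a, b) = -f (b, a))
    (x : FreeGroup (Fin n)) (i : Fin n) :
    geodesicSum f (x * FreeGroup.of i) - geodesicSum f x = f (x, x * FreeGroup.of i) :=
  geodesicSum_mul_mk_singleton_sub hf x (i, true)

theorem geodesicSum_mul_inv_of_sub (hf : ∀ a b, f (a, b) = -f (b, a))
    (x : FreeGroup (Fin n)) (i : Fin n) :
    geodesicSum f (x * (FreeGroup.of i)⁻¹) - geodesicSum f x =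
      f (x, x * (FreeGroup.of i)⁻¹) := by
  rw [FreeGroup.inv_of_eq_mk]
  exact geodesicSum_mul_mk_singleton_sub hf x (i, false)

theorem geodesicSum_sub_of_adj (hf : ∀ a b, f (a, b) = -f (b, a)) {a b : FreeGroup (Fin n)}
    (hab : ∃ i, b = a * FreeGroup.of i ∨ a = b * FreeGroup.of i) :
    geodesicSum f b - geodesicSum f a = f (a, b) := by
  obtain ⟨i, rfl | rfl⟩ := hab
  · exact geodesicSum_mul_of_sub hf a i
  · rw [hf, ← geodesicSum_mul_of_sub hf b i]; ring

theorem norm_geodesicSum_le_card (S : Finset (FreeGroup (Fin n))) (hf : ∀ p, ‖f p‖ ≤ 1)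
    (hS : ∀ p, p.1 ∉ S → f p = 0) (y : FreeGroup (Fin n)) :
    ‖geodesicSum f y‖ ≤ S.card := by
  set J := (Finset.range y.toWord.length).filter (geodesicAt y · ∈ S)
  have hJ : J.card ≤ S.card := by
    refine Finset.card_le_card_of_injOn (geodesicAt y) (fun j hj => (Finset.mem_filter.1 hj).2) ?_
    intro j hj k hk hjk
    have hj' := (Finset.mem_range.1 (Finset.mem_filter.1 hj).1).le
    have hk' := (Finset.mem_range.1 (Finset.mem_filter.1 hk).1).le
    rw [← length_toWord_geodesicAt hj', hjk, length_toWord_geodesicAt hk']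
  calc ‖geodesicSum f y‖
      ≤ ∑ j ∈ Finset.range y.toWord.length, ‖f (geodesicAt y j, geodesicAt y (j + 1))‖ :=
        norm_sum_le _ _
    _ = ∑ j ∈ J, ‖f (geodesicAt y j, geodesicAt y (j + 1))‖ :=
        (Finset.sum_filter_of_ne fun j _ h =>
          by_contra fun hj => h (by rw [hS _ hj, norm_zero])).symm
    _ ≤ ∑ _j ∈ J, (1 : ℝ) := Finset.sum_le_sum fun j _ => hf _
    _ ≤ S.card := by simpa using hJ

end Geodesic

section EdgeIndicator

variable {n : ℕ} {x s : FreeGroup (Fin n)}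

theorem edgeIndicator_swap (h : x ≠ s) (a b : FreeGroup (Fin n)) :
    edgeIndicator x s (a, b) = -edgeIndicator x s (b, a) := by
  unfold edgeIndicator
  split_ifs <;> simp_all

theorem norm_edgeIndicator_le (p : FreeGroup (Fin n) × FreeGroup (Fin n)) :
    ‖edgeIndicator x s p‖ ≤ 1 := by
  unfold edgeIndicator
  split_ifs <;> simp

theorem edgeIndicator_of_fst_notMem {p : FreeGroup (Fin n) × FreeGroup (Fin n)}
    (h : p.1 ∉ ({x, s} : Finset _)) : edgeIndicator x s p = 0 := by
  simp only [Finset.mem_insert, Finset.mem_singleton, not_or] at h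
  simp [edgeIndicator, Prod.ext_iff, h.1, h.2]

theorem norm_geodesicSum_edgeIndicator_le (x s y : FreeGroup (Fin n)) :
    ‖geodesicSum (edgeIndicator x s) y‖ ≤ 2 :=
  (norm_geodesicSum_le_card {x, s} norm_edgeIndicator_le (fun _ => edgeIndicator_of_fst_notMem)
    y).trans (by exact_mod_cast Finset.card_le_two)

theorem tsum_mul_edgeIndicator (h : x ≠ s) (f : FreeGroup (Fin n) × FreeGroup (Fin n) → ℂ) :
    ∑' p, f p * edgeIndicator x s p = f (x, s) - f (s, x) := by
  rw [tsum_eq_sum (s := {(x, s), (s, x)}), Finset.sum_pair (by simp [h])]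
  · simp [edgeIndicator, h.symm, sub_eq_add_neg]
  · intro p hp
    simp only [Finset.mem_insert, Finset.mem_singleton, not_or] at hp
    simp [edgeIndicator, hp.1, hp.2]

end EdgeIndicator

section DivergenceFree

variable {n : ℕ} {f : FreeGroup (Fin n) × FreeGroup (Fin n) → ℂ}

theorem tsum_eq_zero_of_divergence_eq_zero (hanti : ∀ a b, f (a, b) = -f (b, a))
    (hsupp : ∀ a b,
      (¬ ∃ i, b = a * FreeGroup.of i ∨ a = b * FreeGroup.of i) → f (a, b) = 0)
    (hdiv : ∀ x, ∑ i, f (x, x * FreeGroup.of i) - ∑ i, f (x * (FreeGroup.of i)⁻¹, x) = 0)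
    (a : FreeGroup (Fin n)) : ∑' b, f (a, b) = 0 := by
  have hsupport : Function.support (fun b => f (a, b)) ⊆
      Set.range fun l : Fin n × Bool => a * FreeGroup.mk [l] := by
    intro b hb
    by_contra hrange
    refine hb (hsupp a b ?_)
    rintro ⟨i, rfl | rfl⟩
    · exact hrange ⟨(i, true), rfl⟩
    · refine hrange ⟨(i, false), ?_⟩
      simp only [← FreeGroup.inv_of_eq_mk, mul_inv_cancel_right]
  rw [← ((mul_right_injective a).comp FreeGroup.mk_singleton_injective).tsum_eq hsupport,
    tsum_fintype, Fintype.sum_prod_type, ← hdiv a, sub_eq_add_neg, ← Finset.sum_neg_distrib,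
    ← Finset.sum_add_distrib]
  refine Finset.sum_congr rfl fun i _ => ?_
  simp only [Function.comp_apply, Fintype.sum_bool, ← FreeGroup.inv_of_eq_mk]
  rw [hanti a (a * (FreeGroup.of i)⁻¹)]
  rfl

theorem eq_zero_of_divergence_eq_zero (hsum : Summable f) (hanti : ∀ a b, f (a, b) = -f (b, a))
    (hsupp : ∀ a b,
      (¬ ∃ i, b = a * FreeGroup.of i ∨ a = b * FreeGroup.of i) → f (a, b) = 0)
    (hdiv : ∀ x, ∑ i, f (x, x * FreeGroup.of i) - ∑ i, f (x * (FreeGroup.of i)⁻¹, x) = 0) :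
    f = 0 := by
  have hedge (x : FreeGroup (Fin n)) (i : Fin n) : f (x, x * FreeGroup.of i) = 0 := by
    set E := edgeIndicator x (x * FreeGroup.of i)
    have hne : x ≠ x * FreeGroup.of i := by simp
    have hδ (p : FreeGroup (Fin n) × FreeGroup (Fin n)) :
        f p * (geodesicSum E p.2 - geodesicSum E p.1) = f p * E p := by
      by_cases hp : ∃ j, p.2 = p.1 * FreeGroup.of j ∨ p.1 = p.2 * FreeGroup.of j
      · rw [geodesicSum_sub_of_adj (edgeIndicator_swap hne) hp]
      · rw [hsupp p.1 p.2 hp, zero_mul, zero_mul]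
    have hpair := tsum_mul_sub_eq_zero hsum hanti
      (tsum_eq_zero_of_divergence_eq_zero hanti hsupp hdiv)
      (norm_geodesicSum_edgeIndicator_le x (x * FreeGroup.of i))
    rw [tsum_congr hδ, tsum_mul_edgeIndicator hne, hanti (x * _)] at hpair
    linear_combination hpair / 2
  funext ⟨a, b⟩
  by_cases hab : ∃ i, b = a * FreeGroup.of i ∨ a = b * FreeGroup.of i
  · obtain ⟨i, rfl | rfl⟩ := hab
    · exact hedge a i
    · rw [Pi.zero_apply, hanti, hedge b i, neg_zero]
  · exact hsupp a b hab

end DivergenceFree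

/-- For the free group `F_n` with its Cayley tree: the operator `A`
defined by summing edge functions along geodesics from the identity satisfies
`δ(A f) = f` on edges (for antisymmetric `f`); `A` maps each basis edge function
`E_{(x, x aᵢ)}` into `ℓ^∞(F_n)`; and consequently `ker(∂) ∩ ℓ¹(E(F_n)) = {0}`:
every antisymmetric, edge-supported `f ∈ ℓ¹` with
`∑ᵢ f(x, x aᵢ) - ∑ᵢ f(x aᵢ⁻¹, x) = 0` for all `x` vanishes. -/
theorem freeGroup_geodesic_antiderivative {n : ℕ} :
    (∀ f : FreeGroup (Fin n) × FreeGroup (Fin n) → ℂ,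
      (∀ a b : FreeGroup (Fin n), f (a, b) = - f (b, a)) →
      ∀ (x : FreeGroup (Fin n)) (i : Fin n),
        (geodesicSum f (x * FreeGroup.of i) - geodesicSum f x
            = f (x, x * FreeGroup.of i)) ∧
        (geodesicSum f (x * (FreeGroup.of i)⁻¹) - geodesicSum f x
            = f (x, x * (FreeGroup.of i)⁻¹))) ∧
    (∀ x : FreeGroup (Fin n), ∀ i : Fin n, ∃ C : ℝ,
      ∀ y : FreeGroup (Fin n),
        ‖geodesicSum (edgeIndicator x (x * FreeGroup.of i)) y‖ ≤ C) ∧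
    (∀ f : lp (fun _ : FreeGroup (Fin n) × FreeGroup (Fin n) => ℂ) 1,
      (∀ a b : FreeGroup (Fin n), f (a, b) = - f (b, a)) →
      (∀ a b : FreeGroup (Fin n),
        (¬ ∃ i : Fin n, b = a * FreeGroup.of i ∨ a = b * FreeGroup.of i) →
        f (a, b) = 0) →
      (∀ x : FreeGroup (Fin n),
        (∑ i : Fin n, f (x, x * FreeGroup.of i))
          - (∑ i : Fin n, f (x * (FreeGroup.of i)⁻¹, x)) = 0) →
      f = 0) :=
  ⟨fun _ hf x i => ⟨geodesicSum_mul_of_sub hf x i, geodesicSum_mul_inv_of_sub hf x i⟩,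
    fun x _ => ⟨2, norm_geodesicSum_edgeIndicator_le x _⟩,
    fun f hanti hsupp hdiv => lp.ext <|
      eq_zero_of_divergence_eq_zero (lp.memℓp f).summable_of_one hanti hsupp hdiv⟩

end
end

section
/- Let A be a countable set and for a ∈ A let δ_a ∈ ℓ^p(ℕ) be the standard basis vector. For 1 ≤ p ≤ 2 and 0 < ε, if V is a finite-dimensional subspace of ℓ^p(ℕ) such that every δ_a, a ∈ A, is within ℓ^p-distance ε of V, then dim V ≥ |A|(1 - ε²). -/
/-!
For `p ≤ 2` the inclusion `ℓᵖ → ℓ²` does not increase norms, so the image of `V` in `ℓ²` has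
dimension at most `dim V` and still lies within `ε` of every `δ_a`. In a Hilbert space, if `P` is
the orthogonal projection onto a finite-dimensional subspace `K` and the orthonormal vectors `e_a`
lie within `ε` of `K`, then Pythagoras gives `‖P e_a‖² ≥ 1 - ε²`, while expanding in an
orthonormal basis `(b_i)` of `K` and applying Bessel's inequality to each `b_i` gives
`∑_a ‖P e_a‖² = ∑_i ∑_a |⟪b_i, e_a⟫|² ≤ dim K`.
-/

open scoped ENNReal

namespace lp

variable {α : Type*} {E : α → Type*} [∀ i, NormedAddCommGroup (E i)]

theorem norm_le_norm_of_exponent_le {p q : ℝ≥0∞} (hp : p ≠ 0) (hpq : p ≤ q) {f : lp E p}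
    {g : lp E q} (hfg : ⇑g = ⇑f) : ‖g‖ ≤ ‖f‖ := by
  rcases eq_or_ne q ∞ with rfl | hq
  · exact lp.norm_le_of_forall_le (norm_nonneg' f) fun i => hfg ▸ lp.norm_apply_le_norm hp f i
  have hp' : 0 < p.toReal := ENNReal.toReal_pos hp (ne_top_of_le_ne_top hq hpq)
  have hpq' : p.toReal ≤ q.toReal := ENNReal.toReal_mono hq hpq
  have hq' : 0 < q.toReal := hp'.trans_le hpq'
  have hsplit : ∀ t : ℝ, 0 ≤ t → t ^ q.toReal = t ^ p.toReal * t ^ (q.toReal - p.toReal) :=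
    fun t ht => by rw [← Real.rpow_add' ht (by linarith), add_sub_cancel]
  refine lp.norm_le_of_forall_sum_le hq' (norm_nonneg' f) fun s => ?_
  calc ∑ i ∈ s, ‖g i‖ ^ q.toReal
      ≤ ∑ i ∈ s, ‖f i‖ ^ p.toReal * ‖f‖ ^ (q.toReal - p.toReal) := by
        refine Finset.sum_le_sum fun i _ => ?_
        rw [hfg, hsplit _ (norm_nonneg _)]
        gcongr
        exact lp.norm_apply_le_norm hp f i
    _ = (∑ i ∈ s, ‖f i‖ ^ p.toReal) * ‖f‖ ^ (q.toReal - p.toReal) := (Finset.sum_mul ..).symm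
    _ ≤ ‖f‖ ^ p.toReal * ‖f‖ ^ (q.toReal - p.toReal) :=
        mul_le_mul_of_nonneg_right (lp.sum_rpow_le_norm_rpow hp' f s)
          (Real.rpow_nonneg (norm_nonneg' f) _)
    _ = ‖f‖ ^ q.toReal := (hsplit _ (norm_nonneg' f)).symm

variable {𝕜 : Type*} [NormedRing 𝕜] [∀ i, Module 𝕜 (E i)] [∀ i, IsBoundedSMul 𝕜 (E i)]

theorem norm_linearMapOfLE_le {p q : ℝ≥0∞} (hp : p ≠ 0) (hpq : p ≤ q) (f : lp E p) :
    ‖linearMapOfLE 𝕜 E hpq f‖ ≤ ‖f‖ :=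
  norm_le_norm_of_exponent_le hp hpq (coe_linearMapOfLE_apply hpq f)

theorem linearMapOfLE_single [DecidableEq α] {p q : ℝ≥0∞} (hpq : p ≤ q) (i : α) (x : E i) :
    linearMapOfLE 𝕜 E hpq (lp.single p i x) = lp.single q i x := by
  ext1
  simp only [coe_linearMapOfLE_apply, lp.coeFn_single]

theorem orthonormal_single {ι 𝕜 : Type*} [RCLike 𝕜] [DecidableEq ι] :
    Orthonormal 𝕜 (fun i : ι => lp.single 2 i (1 : 𝕜)) := by
  refine orthonormal_iff_ite.2 fun i j => ?_
  rw [inner_single_left, lp.single_apply]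
  by_cases h : i = j <;> simp [h]

end lp

section InnerProductSpace

open scoped InnerProductSpace

variable {𝕜 E : Type*} [RCLike 𝕜] [NormedAddCommGroup E] [InnerProductSpace 𝕜 E]

theorem Submodule.norm_sq_sub_norm_sq_le_norm_sq_starProjection (K : Submodule 𝕜 E)
    [K.HasOrthogonalProjection] (x : E) {w : E} (hw : w ∈ K) :
    ‖x‖ ^ 2 - ‖x - w‖ ^ 2 ≤ ‖K.starProjection x‖ ^ 2 := by
  have hmin : ‖x - K.starProjection x‖ ≤ ‖x - w‖ := by
    rw [starProjection_minimal]
    exact ciInf_le ⟨0, Set.forall_mem_range.2 fun _ => norm_nonneg _⟩ (⟨w, hw⟩ : K)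
  have := K.norm_sq_eq_add_norm_sq_starProjection x
  rw [starProjection_orthogonal_val] at this
  nlinarith [norm_nonneg (x - K.starProjection x)]

theorem Orthonormal.sum_norm_sq_starProjection_le_finrank {ι : Type*} {e : ι → E}
    (he : Orthonormal 𝕜 e) (s : Finset ι) (K : Submodule 𝕜 E) [FiniteDimensional 𝕜 K] :
    ∑ a ∈ s, ‖K.starProjection (e a)‖ ^ 2 ≤ Module.finrank 𝕜 K := by
  let b := stdOrthonormalBasis 𝕜 K
  have hparseval : ∀ x : E, ‖K.starProjection x‖ ^ 2 = ∑ i, ‖⟪(b i : E), x⟫_𝕜‖ ^ 2 := fun x => by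
    rw [K.starProjection_apply, Submodule.norm_coe, ← b.sum_sq_norm_inner_right]
    simp only [Submodule.inner_orthogonalProjectionOnto_eq_of_mem_left]
  have hbessel : ∀ i, ∑ a ∈ s, ‖⟪(b i : E), e a⟫_𝕜‖ ^ 2 ≤ 1 := fun i => by
    simpa [norm_inner_symm, Submodule.norm_coe, b.orthonormal.1 i] using
      he.sum_inner_products_le (s := s) (b i : E)
  calc ∑ a ∈ s, ‖K.starProjection (e a)‖ ^ 2
      = ∑ i, ∑ a ∈ s, ‖⟪(b i : E), e a⟫_𝕜‖ ^ 2 := by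
        simp only [hparseval]
        exact Finset.sum_comm
    _ ≤ ∑ _i : Fin (Module.finrank 𝕜 K), (1 : ℝ) := Finset.sum_le_sum fun i _ => hbessel i
    _ = Module.finrank 𝕜 K := by simp

theorem Orthonormal.card_mul_one_sub_sq_le_finrank {ι : Type*} {e : ι → E}
    (he : Orthonormal 𝕜 e) (s : Finset ι) (K : Submodule 𝕜 E) [FiniteDimensional 𝕜 K] {ε : ℝ}
    (hK : ∀ a ∈ s, ∃ w ∈ K, ‖e a - w‖ ≤ ε) :
    (s.card : ℝ) * (1 - ε ^ 2) ≤ Module.finrank 𝕜 K := by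
  have hproj : ∀ a ∈ s, 1 - ε ^ 2 ≤ ‖K.starProjection (e a)‖ ^ 2 := fun a ha => by
    obtain ⟨w, hw, hdist⟩ := hK a ha
    have := K.norm_sq_sub_norm_sq_le_norm_sq_starProjection (e a) hw
    rw [he.1 a, one_pow] at this
    nlinarith [norm_nonneg (e a - w)]
  calc (s.card : ℝ) * (1 - ε ^ 2) = ∑ _a ∈ s, (1 - ε ^ 2) := by
        rw [Finset.sum_const, nsmul_eq_mul]
    _ ≤ ∑ a ∈ s, ‖K.starProjection (e a)‖ ^ 2 := Finset.sum_le_sum hproj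
    _ ≤ Module.finrank 𝕜 K := he.sum_norm_sq_starProjection_le_finrank s K

end InnerProductSpace

theorem lp_basis_eps_contained_dim_lower_bound_general
    {p : ℝ≥0∞} (hp1 : 1 ≤ p) (hp2 : p ≤ 2)
    (A : Finset ℕ)
    (V : Submodule ℂ (lp (fun _ : ℕ => ℂ) p)) [FiniteDimensional ℂ V]
    {ε : ℝ}
    (hcont : ∀ a ∈ A, ∃ v ∈ V, ‖lp.single p a (1 : ℂ) - v‖ ≤ ε) :
    (A.card : ℝ) * (1 - ε ^ 2) ≤ (Module.finrank ℂ V : ℝ) := by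
  let incl := lp.linearMapOfLE ℂ (fun _ : ℕ => ℂ) hp2
  have hp : p ≠ 0 := (one_pos.trans_le hp1).ne'
  have hcont₂ : ∀ a ∈ A, ∃ w ∈ V.map incl, ‖lp.single 2 a (1 : ℂ) - w‖ ≤ ε := fun a ha => by
    obtain ⟨v, hv, hdist⟩ := hcont a ha
    refine ⟨incl v, Submodule.mem_map_of_mem hv, le_trans ?_ hdist⟩
    rw [← lp.linearMapOfLE_single (𝕜 := ℂ) hp2, ← map_sub]
    exact lp.norm_linearMapOfLE_le hp hp2 _
  calc (A.card : ℝ) * (1 - ε ^ 2) ≤ Module.finrank ℂ (V.map incl) :=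
        lp.orthonormal_single.card_mul_one_sub_sq_le_finrank A _ hcont₂
    _ ≤ Module.finrank ℂ V := by exact_mod_cast Submodule.finrank_map_le incl V

/-- Let `A ⊆ ℕ` be finite, and for `a ∈ A` let `δ_a ∈ ℓᵖ(ℕ)` be the
standard basis vector. For `1 ≤ p ≤ 2` and `ε > 0`, if `V` is a finite-dimensional subspace
of `ℓᵖ(ℕ)` such that every `δ_a`, `a ∈ A`, is within `ℓᵖ`-distance `ε` of `V`, then
`dim V ≥ |A| (1 - ε²)`. -/
theorem lp_basis_eps_contained_dim_lower_bound
    {p : ℝ≥0∞} (hp1 : 1 ≤ p) (hp2 : p ≤ 2)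
    (A : Finset ℕ)
    (V : Submodule ℂ (lp (fun _ : ℕ => ℂ) p)) [FiniteDimensional ℂ V]
    {ε : ℝ} (hε : 0 < ε)
    (hcont : ∀ a ∈ A, ∃ v ∈ V, ‖lp.single p a (1 : ℂ) - v‖ ≤ ε) :
    (A.card : ℝ) * (1 - ε ^ 2) ≤ (Module.finrank ℂ V : ℝ) :=
  lp_basis_eps_contained_dim_lower_bound_general hp1 hp2 A V hcont
end
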